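/- arXiv:1412.8530 — 5 statements merged into one kernel-verified Lean document; each statement's English description precedes it below -/
import Mathlib

section
/- Let L be a finite field of order q and s an integer with gcd(s, q-1) = 1. Then for every a, b ∈ L, the Weil sum Σ_{x∈L} μ(b x^s - a x) is a real number. -/
open Finset

/-- The canonical additive character of a finite field of characteristic `p`:
`μ(x) = exp(2πi · Tr(x)/p)` where `Tr` is the absolute trace to `F_p`. -/
noncomputable def mu (p : ℕ) {L : Type*} [Field L] [Fintype L] [Algebra (ZMod p) L] (x : L) : ℂ :=
  Complex.exp (2 * Real.pi * Complex.I * ((Algebra.trace (ZMod p) L x).val : ℂ) / p)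

lemma conj_mu (p : ℕ) [Fact p.Prime] {L : Type*} [Field L] [Fintype L]
    [Algebra (ZMod p) L] (y : L) :
    (starRingEnd ℂ) (mu p y) = mu p (-y) := by
  have hp0 : 0 < p := (Fact.out (p := p.Prime)).pos
  have hpC : (p : ℂ) ≠ 0 := Nat.cast_ne_zero.mpr hp0.ne'
  unfold mu
  rw [← Complex.exp_conj, Complex.exp_eq_exp_iff_exists_int]
  have htr : Algebra.trace (ZMod p) L (-y) = -Algebra.trace (ZMod p) L y := by
    simp
  rw [htr]
  by_cases h0 : Algebra.trace (ZMod p) L y = 0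
  · refine ⟨0, ?_⟩
    rw [h0]
    simp
  · have hval : ((-Algebra.trace (ZMod p) L y).val : ℂ)
        = (p : ℂ) - ((Algebra.trace (ZMod p) L y).val : ℂ) := by
      rw [ZMod.neg_val, if_neg h0]
      have hle : (Algebra.trace (ZMod p) L y).val ≤ p := le_of_lt (ZMod.val_lt _)
      push_cast [Nat.cast_sub hle]
      ring
    refine ⟨-1, ?_⟩
    rw [hval]
    have : (starRingEnd ℂ) (2 * Real.pi * Complex.I *
        ((Algebra.trace (ZMod p) L y).val : ℂ) / p)
        = -(2 * Real.pi * Complex.I * ((Algebra.trace (ZMod p) L y).val : ℂ) / p) := by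
      simp only [map_div₀, map_mul, Complex.conj_I, map_natCast, map_ofNat, Complex.conj_ofReal]
      ring
    rw [this]
    field_simp
    ring

theorem stmt_2 (p : ℕ) [Fact p.Prime] (L : Type*) [Field L] [Fintype L] [CharP L p]
    [Algebra (ZMod p) L] (s : ℕ) (hcop : Nat.Coprime s (Fintype.card L - 1))
    (a b : L) :
    ∃ r : ℝ, ∑ x : L, mu p (b * x ^ s - a * x) = (r : ℂ) := by
  have hodd : ∀ x : L, (-x) ^ s = -(x ^ s) := by
    rcases (Fact.out (p := p.Prime)).eq_two_or_odd' with h2 | hpodd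
    · intro x
      subst h2
      haveI : CharP L 2 := ‹_›
      rw [CharTwo.neg_eq, CharTwo.neg_eq]
    · -- card L is odd, so card L - 1 is even, so s is odd
      obtain ⟨n, hn⟩ := FiniteField.card L p
      have hcard : Odd (Fintype.card L) := by
        rw [hn.2]; exact hpodd.pow
      have heven : Even (Fintype.card L - 1) := Nat.Odd.sub_odd hcard odd_one
      have hsodd : Odd s := by
        rcases Nat.even_or_odd s with hs | hs
        · exfalso
          have h2 : 2 ∣ Nat.gcd s (Fintype.card L - 1) :=
            Nat.dvd_gcd hs.two_dvd heven.two_dvd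
          rw [hcop] at h2
          omega
        · exact hs
      exact fun x => hsodd.neg_pow x
  set S := ∑ x : L, mu p (b * x ^ s - a * x) with hSdef
  have hS : (starRingEnd ℂ) S = S := by
    calc (starRingEnd ℂ) S = ∑ x : L, mu p (b * (-x) ^ s - a * (-x)) := by
          rw [hSdef, map_sum]
          refine Finset.sum_congr rfl fun x _ => ?_
          rw [conj_mu]
          congr 1
          rw [hodd x]; ring
      _ = S := Fintype.sum_equiv (Equiv.neg L) _ _ (fun x => by simp)
  exact ⟨S.re, (Complex.conj_eq_iff_re.mp hS).symm⟩
end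

section
/- Let L be a finite field of characteristic p and order q, and let s be an invertible exponent (gcd(s, q-1) = 1). Then all Weil sums W(a) = Σ_{x∈L} μ(x^s - ax) lie in ℤ if and only if s ≡ 1 (mod p-1). -/
open Finset

/-!
The Weil sum `W(a) = ∑ₓ μ(xˢ - a x)` is an integer combination of powers of `ζ = exp(2πi/p)`.

If `s ≡ 1 mod p - 1`, then `cˢ = c` on `𝔽ₚ`, so the substitution `x ↦ c x` shows that
`Tr(xˢ - a x)` takes every nonzero value of `𝔽ₚ` equally often; hence `W(a) = N₀ - N₁ ∈ ℤ`.

Conversely, an integer `W(a)` is fixed by the Galois automorphism `ζ ↦ ζᶜ` (`c ∈ 𝔽ₚˣ`), which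
sends `W(a)` to `W(c e a)` for any `e` with `c eˢ = 1` (such `e` exists as `s` is prime to
`q - 1`). So `W` is invariant under `a ↦ d a`, `d = c e`, and the Fourier identity
`∑ₐ W(a) μ(a y) = q μ(yˢ)` gives `μ(dˢ y) = μ(y)` for all `y`, i.e. `dˢ = 1`, i.e. `cˢ = c`.
This holds for all `c ∈ 𝔽ₚˣ` exactly when `p - 1 ∣ s - 1`.
-/

open Polynomial in
theorem IsPrimitiveRoot.aeval_pow_eq_zero {K : Type*} [Field K] [CharZero K] {n : ℕ} [NeZero n]
    {ζ : K} (hζ : IsPrimitiveRoot ζ n) {r : ℕ} (hr : r.Coprime n) {P : ℚ[X]}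
    (hP : aeval ζ P = 0) : aeval (ζ ^ r) P = 0 := by
  have hmin : minpoly ℚ ζ = minpoly ℚ (ζ ^ r) := by
    rw [← cyclotomic_eq_minpoly_rat hζ (NeZero.pos n),
      ← cyclotomic_eq_minpoly_rat (hζ.pow_of_coprime r hr) (NeZero.pos n)]
  obtain ⟨Q, rfl⟩ := hmin ▸ minpoly.dvd ℚ ζ hP
  rw [map_mul, minpoly.aeval, zero_mul]

theorem ZMod.isPrimitiveRoot_stdAddChar_one (N : ℕ) [NeZero N] :
    IsPrimitiveRoot (ZMod.stdAddChar (1 : ZMod N)) N := by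
  convert Complex.isPrimitiveRoot_exp N (NeZero.ne N) using 1
  rw [← Int.cast_one, ZMod.stdAddChar_coe]
  push_cast
  ring_nf

open Polynomial in
theorem AddChar.sum_apply_unit_mul_of_eq_intCast {K : Type*} [Field K] [CharZero K] {N : ℕ}
    [NeZero N] {ψ : AddChar (ZMod N) K} (hψ : IsPrimitiveRoot (ψ 1) N) {ι : Type*} [Fintype ι]
    (t : ι → ZMod N) {n : ℤ} (h : ∑ i, ψ (t i) = n) (u : (ZMod N)ˣ) :
    ∑ i, ψ (u * t i) = n := by
  have hψ_natCast (m : ℕ) : ψ m = ψ 1 ^ m := by rw [← map_nsmul_eq_pow, nsmul_one]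
  set P : ℚ[X] := ∑ i, X ^ (t i).val - C (n : ℚ)
  have hP (ξ : K) : aeval ξ P = ∑ i, ξ ^ (t i).val - n := by simp [P]
  have hconj := hψ.aeval_pow_eq_zero (ZMod.val_coe_unit_coprime u) (P := P) (by
    simp_rw [hP, ← hψ_natCast, ZMod.natCast_zmod_val, h, sub_self])
  rw [hP, sub_eq_zero] at hconj
  rw [← hconj]
  refine sum_congr rfl fun i _ => ?_
  rw [← pow_mul, ← hψ_natCast]
  push_cast [ZMod.natCast_zmod_val]
  rfl

theorem AddChar.sum_apply_eq_card_fiber_zero_sub_card_fiber_one {F R : Type*} [Field F]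
    [Fintype F] [DecidableEq F] [CommRing R] [IsDomain R] {ψ : AddChar F R} (hψ : ψ ≠ 1)
    {ι : Type*} [Fintype ι] (t : ι → F) (h : ∀ j ≠ 0, #{i | t i = j} = #{i | t i = 1}) :
    ∑ i, ψ (t i) = (#{i | t i = 0} : R) - #{i | t i = 1} := by
  have hfib : ∑ i, ψ (t i) = ∑ j, (#{i | t i = j} : R) * ψ j := by
    rw [← sum_fiberwise univ t]
    refine sum_congr rfl fun j _ => ?_
    rw [sum_congr rfl fun i hi => by rw [(mem_filter.mp hi).2], sum_const, nsmul_eq_mul]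
  calc ∑ i, ψ (t i)
      = ∑ j, ((#{i | t i = j} : R) - #{i | t i = 1}) * ψ j
          + (#{i | t i = 1} : R) * ∑ j, ψ j := by
        rw [hfib, mul_sum, ← sum_add_distrib]
        exact sum_congr rfl fun j _ => by ring
    _ = (#{i | t i = 0} : R) - #{i | t i = 1} := by
        rw [sum_eq_zero_of_ne_one hψ, mul_zero, add_zero, sum_eq_single 0, map_zero_eq_one,
          mul_one]
        · intro j _ hj
          rw [h j hj, sub_self, zero_mul]
        · simp

theorem card_filter_eq_of_comp_equiv {ι α : Type*} [Fintype ι] [DecidableEq α] (t : ι → α)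
    (σ : ι ≃ ι) {f : α → α} (hf : Function.Injective f) (h : ∀ i, t (σ i) = f (t i)) (j : α) :
    #{i | t i = f j} = #{i | t i = j} := by
  rw [card_filter, card_filter, ← σ.sum_comp]
  simp only [h, hf.eq_iff]

theorem ZMod.pow_eq_self_iff {p : ℕ} [Fact p.Prime] {s : ℕ} :
    (∀ c : ZMod p, c ≠ 0 → c ^ s = c) ↔ (s : ZMod (p - 1)) = 1 := by
  rw [← Nat.cast_one (R := ZMod (p - 1)), ZMod.natCast_eq_natCast_iff]
  constructor
  · intro h
    obtain ⟨g, hg⟩ := IsCyclic.exists_ofOrder_eq_natCard (α := (ZMod p)ˣ)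
    rw [Nat.card_eq_fintype_card, ZMod.card_units] at hg
    rw [← hg, ← pow_eq_pow_iff_modEq, pow_one]
    exact Units.ext (by simpa using h g g.ne_zero)
  · intro hs c hc
    have hu := (pow_eq_pow_iff_modEq (x := Units.mk0 c hc)).mpr
      (hs.of_dvd (ZMod.orderOf_units_dvd_card_sub_one _))
    simpa using congrArg Units.val hu

theorem FiniteField.exists_pow_eq_of_coprime {L : Type*} [Field L] [Fintype L] {s : ℕ}
    (hs : s.Coprime (Fintype.card L - 1)) (y : Lˣ) : ∃ c : Lˣ, c ^ s = y := by
  classical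
  have hcard : (Nat.card Lˣ).Coprime s := by
    rw [Nat.card_eq_fintype_card, Fintype.card_units]
    exact hs.symm
  exact (powCoprime hcard).surjective y

section WeilSum

variable {L R : Type*} [Field L] [Fintype L] [CommRing R]

def weilSum (ψ : AddChar L R) (s : ℕ) (a : L) : R := ∑ x, ψ (x ^ s - a * x)

theorem sum_apply_mul_eq_weilSum (ψ : AddChar L R) {s : ℕ} {r e : L}
    (he : e ≠ 0) (hre : r * e ^ s = 1) (a : L) :
    ∑ x, ψ (r * (x ^ s - a * x)) = weilSum ψ s (r * e * a) := by
  refine (Fintype.sum_equiv (Equiv.mulLeft₀ e he) (fun y => ψ (y ^ s - r * e * a * y))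
    (fun x => ψ (r * (x ^ s - a * x))) fun y => congrArg ψ ?_).symm
  rw [Equiv.mulLeft₀_apply, mul_pow]
  linear_combination -(y ^ s) * hre

variable [IsDomain R] {ψ : AddChar L R}

theorem sum_weilSum_mul_apply_mul (hψ : ψ.IsPrimitive) (s : ℕ) (c : L) :
    ∑ a, weilSum ψ s a * ψ (a * c) = Fintype.card L * ψ (c ^ s) := by
  classical
  calc ∑ a, weilSum ψ s a * ψ (a * c)
      = ∑ x, ψ (x ^ s) * ∑ a, ψ (a * (c - x)) := by
        simp_rw [weilSum, sum_mul, mul_sum]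
        rw [sum_comm]
        refine sum_congr rfl fun x _ => sum_congr rfl fun a _ => ?_
        rw [← AddChar.map_add_eq_mul, ← AddChar.map_add_eq_mul]
        ring_nf
    _ = Fintype.card L * ψ (c ^ s) := by
        simp_rw [AddChar.sum_mulShift _ hψ, sub_eq_zero]
        simp [mul_comm]

theorem apply_pow_mul_eq_of_weilSum_mul_eq [CharZero R] (hψ : ψ.IsPrimitive) {s : ℕ} {d : L}
    (hd : d ≠ 0) (h : ∀ a, weilSum ψ s (d * a) = weilSum ψ s a) (c : L) :
    ψ (d ^ s * c ^ s) = ψ (c ^ s) := by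
  refine mul_left_cancel₀ (Nat.cast_ne_zero.mpr Fintype.card_ne_zero : (Fintype.card L : R) ≠ 0) ?_
  rw [← mul_pow, ← sum_weilSum_mul_apply_mul hψ, ← sum_weilSum_mul_apply_mul hψ]
  refine Fintype.sum_equiv (Equiv.mulLeft₀ d hd) _ _ fun a => ?_
  rw [Equiv.mulLeft₀_apply, h, mul_assoc, mul_left_comm]

theorem AddChar.eq_one_of_forall_apply_mul_pow_eq (hψ : ψ.IsPrimitive) {s : ℕ}
    (hs : s.Coprime (Fintype.card L - 1)) {b : L} (h : ∀ c, ψ (b * c ^ s) = ψ (c ^ s)) :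
    b = 1 := by
  have hb (y : L) : ψ (b * y) = ψ y := by
    rcases eq_or_ne y 0 with rfl | hy
    · rw [mul_zero]
    obtain ⟨c, hc⟩ := FiniteField.exists_pow_eq_of_coprime hs (Units.mk0 y hy)
    have hyc : y = (c : L) ^ s := by rw [← Units.val_pow_eq_pow_val, hc, Units.val_mk0]
    rw [hyc, h]
  by_contra hb1
  refine hψ (sub_ne_zero.mpr hb1) (DFunLike.ext _ _ fun y => ?_)
  have hψy : ψ y ≠ 0 := fun h0 => by simpa [h0] using ψ.map_add_eq_mul y (-y)
  rw [mulShift_apply, AddChar.one_apply, ← mul_eq_right₀ hψy, ← map_add_eq_mul, sub_mul,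
    one_mul, sub_add_cancel, hb]

end WeilSum

theorem Algebra.trace_algebraMap_mul {K L : Type*} [CommRing K] [CommRing L] [Algebra K L]
    (c : K) (z : L) : Algebra.trace K L (algebraMap K L c * z) = c * Algebra.trace K L z := by
  rw [← Algebra.smul_def, map_smul, smul_eq_mul]



section TraceChar

variable {p : ℕ} [Fact p.Prime] {L : Type*} [Field L] [Algebra (ZMod p) L]

variable (p L) in
noncomputable def traceChar : AddChar L ℂ :=
  ZMod.stdAddChar.compAddMonoidHom (Algebra.trace (ZMod p) L).toAddMonoidHom

theorem mu_eq_traceChar [Fintype L] (x : L) : mu p x = traceChar p L x := by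
  rw [mu, traceChar, AddChar.compAddMonoidHom_apply, ZMod.stdAddChar_apply, ZMod.toCircle_apply]
  rfl

theorem traceChar_algebraMap_mul (c : ZMod p) (z : L) :
    traceChar p L (algebraMap (ZMod p) L c * z) =
      ZMod.stdAddChar (c * Algebra.trace (ZMod p) L z) := by
  rw [traceChar, AddChar.compAddMonoidHom_apply, LinearMap.toAddMonoidHom_coe,
    Algebra.trace_algebraMap_mul]

theorem traceChar_isPrimitive [Finite L] : (traceChar p L).IsPrimitive := by
  refine AddChar.IsPrimitive.of_ne_one fun h => ?_
  have : FiniteDimensional (ZMod p) L := Module.Finite.of_finite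
  obtain ⟨z, hz⟩ := Algebra.trace_surjective (ZMod p) L 1
  have hz1 := DFunLike.congr_fun h z
  rw [traceChar, AddChar.compAddMonoidHom_apply, LinearMap.toAddMonoidHom_coe, hz,
    AddChar.one_apply, ← AddChar.map_zero_eq_one (ZMod.stdAddChar (N := p))] at hz1
  exact one_ne_zero ((ZMod.injective_stdAddChar (N := p)) hz1)

variable [Fintype L] {s : ℕ}

theorem exists_weilSum_traceChar_eq_intCast (hs : ∀ c : ZMod p, c ≠ 0 → c ^ s = c) (a : L) :
    ∃ n : ℤ, weilSum (traceChar p L) s a = n := by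
  classical
  set t : L → ZMod p := fun x => Algebra.trace (ZMod p) L (x ^ s - a * x)
  have ht (c : ZMod p) (hc : c ≠ 0) (x : L) : t (algebraMap (ZMod p) L c * x) = c * t x := by
    show Algebra.trace _ _ _ = c * Algebra.trace _ _ _
    rw [← Algebra.trace_algebraMap_mul]
    congr 1
    rw [mul_pow, ← map_pow, hs c hc]
    ring
  have hfib (j : ZMod p) (hj : j ≠ 0) : #{x | t x = j} = #{x | t x = 1} := by
    simpa using card_filter_eq_of_comp_equiv t
      (Equiv.mulLeft₀ _ ((map_ne_zero (algebraMap (ZMod p) L)).mpr hj))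
      (mul_right_injective₀ hj) (ht j hj) 1
  have hψ : (ZMod.stdAddChar (N := p)) ≠ 1 :=
    AddChar.ne_one_iff.mpr ⟨1, (ZMod.isPrimitiveRoot_stdAddChar_one p).ne_one
      (Fact.out : p.Prime).one_lt⟩
  refine ⟨#{x | t x = 0} - #{x | t x = 1}, ?_⟩
  push_cast
  exact AddChar.sum_apply_eq_card_fiber_zero_sub_card_fiber_one hψ t hfib

theorem pow_eq_self_of_weilSum_traceChar_eq_intCast (hcop : s.Coprime (Fintype.card L - 1))
    (h : ∀ a : L, ∃ n : ℤ, weilSum (traceChar p L) s a = n) (c : ZMod p) (hc : c ≠ 0) :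
    c ^ s = c := by
  set r := algebraMap (ZMod p) L c
  have hr : r ≠ 0 := (map_ne_zero _).mpr hc
  obtain ⟨e, he⟩ := FiniteField.exists_pow_eq_of_coprime hcop (Units.mk0 r hr)⁻¹
  have hre : r * (e : L) ^ s = 1 := by
    rw [← Units.val_pow_eq_pow_val, he, Units.val_inv_eq_inv_val, Units.val_mk0, mul_inv_cancel₀ hr]
  -- Galois conjugation `ζ ↦ ζ ^ c` fixes the integer `W(a)`, and sends it to `W(r e a)`.
  have hinv (a : L) : weilSum (traceChar p L) s (r * e * a) = weilSum (traceChar p L) s a := by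
    obtain ⟨n, hn⟩ := h a
    rw [← sum_apply_mul_eq_weilSum _ e.ne_zero hre, hn,
      ← AddChar.sum_apply_unit_mul_of_eq_intCast (ZMod.isPrimitiveRoot_stdAddChar_one p) _ hn
        (Units.mk0 c hc)]
    exact sum_congr rfl fun x _ => traceChar_algebraMap_mul c _
  have hd : (r * e) ^ s = 1 := AddChar.eq_one_of_forall_apply_mul_pow_eq traceChar_isPrimitive hcop
    (apply_pow_mul_eq_of_weilSum_mul_eq traceChar_isPrimitive
      (mul_ne_zero hr e.ne_zero) hinv)
  refine (algebraMap (ZMod p) L).injective ?_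
  rw [map_pow]
  linear_combination (-r ^ s) * hre + r * hd

end TraceChar

theorem stmt_5_general (p : ℕ) [Fact p.Prime] (L : Type*) [Field L] [Fintype L]
    [Algebra (ZMod p) L] (s : ℕ) (hcop : Nat.Coprime s (Fintype.card L - 1)) :
    (∀ a : L, ∃ n : ℤ, ∑ x : L, mu p (x ^ s - a * x) = (n : ℂ)) ↔
      (s : ZMod (p - 1)) = 1 := by
  simp_rw [mu_eq_traceChar, ← ZMod.pow_eq_self_iff]
  exact ⟨pow_eq_self_of_weilSum_traceChar_eq_intCast hcop, exists_weilSum_traceChar_eq_intCast⟩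

theorem stmt_5 (p : ℕ) [Fact p.Prime] (L : Type*) [Field L] [Fintype L] [CharP L p]
    [Algebra (ZMod p) L] (s : ℕ) (hcop : Nat.Coprime s (Fintype.card L - 1)) :
    (∀ a : L, ∃ n : ℤ, ∑ x : L, mu p (x ^ s - a * x) = (n : ℂ)) ↔
      (s : ZMod (p - 1)) = 1 :=
  stmt_5_general p L s hcop
end

section
/- Let L be a finite field of order q and s an invertible exponent whose Weil sum is three-valued on L^× with values 0, A, B. Then the number V of pairs (x,y) ∈ L² with x + y = 1 and x^s + y^s = 1 satisfies V = A + B - AB/q. -/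
set_option linter.unusedSectionVars false
open Finset

section aux
variable (p : ℕ) [Fact p.Prime] {L : Type*} [Field L] [Fintype L] [CharP L p]
    [Algebra (ZMod p) L]

/-- helper exponential -/
noncomputable def ee (p n : ℕ) : ℂ := Complex.exp (2 * Real.pi * Complex.I * n / p)

lemma ee_add (m n : ℕ) : ee p (m + n) = ee p m * ee p n := by
  rw [ee, ee, ee, ← Complex.exp_add]
  congr 1
  push_cast
  ring

lemma ee_p_mul (k : ℕ) : ee p (p * k) = 1 := by
  have hp : (p : ℂ) ≠ 0 := by
    exact_mod_cast (Fact.out : p.Prime).ne_zero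
  rw [ee]
  have : 2 * (Real.pi:ℂ) * Complex.I * ((p * k : ℕ) : ℂ) / p = (k:ℕ) * (2 * Real.pi * Complex.I) := by
    push_cast; field_simp
  rw [this, Complex.exp_nat_mul_two_pi_mul_I]

lemma ee_mod (n : ℕ) : ee p (n % p) = ee p n := by
  conv_rhs => rw [← Nat.mod_add_div n p]
  rw [ee_add, ee_p_mul, mul_one]

lemma mu_eq (x : L) : mu p x = ee p (Algebra.trace (ZMod p) L x).val := by
  rfl

lemma mu_add (x y : L) : mu p (x + y) = mu p x * mu p y := by
  rw [mu_eq, mu_eq, mu_eq, map_add, ZMod.val_add, ee_mod, ee_add]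

lemma mu_zero : mu p (0 : L) = 1 := by
  rw [mu_eq, map_zero, ZMod.val_zero, ee]
  simp

end aux

section aux2
variable (p : ℕ) [Fact p.Prime] {L : Type*} [Field L] [Fintype L] [CharP L p]
    [Algebra (ZMod p) L]

lemma ee_ne_one {n : ℕ} (h0 : 0 < n) (hn : n < p) : ee p n ≠ 1 := by
  intro h
  rw [ee, Complex.exp_eq_one_iff] at h
  obtain ⟨k, hk⟩ := h
  have hp : (p : ℂ) ≠ 0 := by exact_mod_cast (Fact.out : p.Prime).ne_zero
  have h2 : (2 * (Real.pi:ℂ) * Complex.I) ≠ 0 := by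
    simp [Real.pi_ne_zero, Complex.I_ne_zero]
  have : (n : ℂ) = k * p := by
    field_simp at hk
    exact mul_left_cancel₀ h2 (by rw [hk]; ring)
  have hz : (n : ℤ) = k * p := by exact_mod_cast this
  have : (p:ℤ) ∣ n := ⟨k, by linarith⟩
  have := Int.le_of_dvd (by exact_mod_cast h0) this
  omega

lemma exists_mu_ne_one : ∃ y : L, mu p y ≠ 1 := by
  obtain ⟨y, hy⟩ := Algebra.trace_surjective (ZMod p) L 1
  refine ⟨y, ?_⟩
  rw [mu_eq, hy]
  have hp : 1 < p := (Fact.out : p.Prime).one_lt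
  have : (1 : ZMod p).val = 1 := by
    rw [ZMod.val_one]
  rw [this]
  exact ee_ne_one p one_pos hp

lemma sum_mu : ∑ x : L, mu p x = 0 := by
  obtain ⟨y, hy⟩ := exists_mu_ne_one p (L := L)
  have h : mu p y * ∑ x : L, mu p x = ∑ x : L, mu p x := by
    rw [Finset.mul_sum]
    rw [← Equiv.sum_comp (Equiv.addLeft y) (fun x => mu p x)]
    apply Finset.sum_congr rfl
    intro x _
    rw [Equiv.coe_addLeft, mu_add]
  by_contra hne
  exact hy (mul_right_cancel₀ hne (by rw [h, one_mul]))

open scoped Classical in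
lemma sum_mu_mul (c : L) :
    ∑ x : L, mu p (c * x) = if c = 0 then (Fintype.card L : ℂ) else 0 := by
  split_ifs with hc
  · simp [hc, mu_zero]
  · exact (Equiv.sum_comp (Equiv.mulLeft₀ c hc) (mu p)).trans (sum_mu p)

end aux2

set_option maxHeartbeats 1000000

section pow
variable {L : Type*} [Field L] [Fintype L]

lemma pow_eq_self_of_modeq (n : ℕ) (h1 : 1 ≤ n)
    (h : n ≡ 1 [MOD Fintype.card L - 1]) (x : L) : x ^ n = x := by
  rcases eq_or_ne x 0 with rfl | hx
  · rw [zero_pow (by omega)]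
  · obtain ⟨k, hk⟩ := (Nat.modEq_iff_dvd' h1).mp h.symm
    have hn : n = 1 + (Fintype.card L - 1) * k := by omega
    rw [hn, pow_add, pow_one, pow_mul, FiniteField.pow_card_sub_one_eq_one x hx,
      one_pow, mul_one]

lemma pow_s_bijective (s : ℕ) (hs : 1 ≤ s)
    (hcop : Nat.Coprime s (Fintype.card L - 1)) :
    Function.Bijective (fun x : L => x ^ s) := by
  have hq1 : 1 ≤ Fintype.card L - 1 := by
    have := Fintype.one_lt_card (α := L); omega
  have hφ : 1 ≤ (Fintype.card L - 1).totient := Nat.totient_pos.mpr (by omega)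
  set t := s ^ ((Fintype.card L - 1).totient - 1) with ht
  have hst : s * t = s ^ (Fintype.card L - 1).totient := by
    rw [ht, ← pow_succ']
    congr 1
    omega
  have hmod : s * t ≡ 1 [MOD Fintype.card L - 1] := by
    rw [hst]; exact Nat.ModEq.pow_totient hcop
  have hst1 : 1 ≤ s * t := by
    rw [hst]; exact Nat.one_le_pow _ _ (by omega)
  rw [← Finite.injective_iff_bijective]
  intro x y hxy
  simp only at hxy
  have : x ^ (s * t) = y ^ (s * t) := by
    rw [pow_mul, pow_mul, hxy]
  rwa [pow_eq_self_of_modeq _ hst1 hmod, pow_eq_self_of_modeq _ hst1 hmod] at this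

lemma neg_pow_s (p : ℕ) [Fact p.Prime] [CharP L p] (s : ℕ)
    (hcop : Nat.Coprime s (Fintype.card L - 1)) (x : L) :
    (-x) ^ s = -(x ^ s) := by
  rcases eq_or_ne p 2 with hp2 | hp2
  · subst hp2
    haveI : CharP L 2 := by assumption
    rw [CharTwo.neg_eq, CharTwo.neg_eq]
  · have hodd : Odd s := by
      have hp : p.Prime := Fact.out
      obtain ⟨n, hn⟩ := FiniteField.card L p
      have hpodd : Odd p := hp.odd_of_ne_two hp2
      have hqodd : Odd (Fintype.card L) := by
        rw [hn.2]; exact hpodd.pow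
      have h2 : 2 ∣ Fintype.card L - 1 := by
        obtain ⟨m, hm⟩ := hqodd
        have : 1 ≤ Fintype.card L := Fintype.card_pos
        omega
      rcases Nat.even_or_odd s with he | ho
      · exfalso
        have : 2 ∣ Nat.gcd s (Fintype.card L - 1) :=
          Nat.dvd_gcd he.two_dvd h2
        rw [hcop] at this
        omega
      · exact ho
    exact hodd.neg_pow x
end pow




section aux3
variable (p : ℕ) [Fact p.Prime] {L : Type*} [Field L] [Fintype L] [CharP L p]
    [Algebra (ZMod p) L] (s : ℕ) (hs : 1 ≤ s) (hcop : Nat.Coprime s (Fintype.card L - 1))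

open scoped Classical

lemma mu_split (u v : L) (w : L) (h : w = u + v) : mu p w = mu p u * mu p v := by
  rw [h, mu_add]

include hs hcop in
lemma W_zero : ∑ x : L, mu p (x ^ s - (0:L) * x) = 0 := by
  have h1 : ∀ x : L, mu p (x ^ s - (0:L) * x) = mu p (x ^ s) := by
    intro x; congr 1; ring
  rw [Finset.sum_congr rfl (fun x _ => h1 x)]
  rw [Fintype.sum_bijective _ (pow_s_bijective s hs hcop) _ (mu p) (fun x => rfl)]
  exact sum_mu p

include hs hcop in
lemma moment_one :
    ∑ a : L, ∑ x : L, mu p (x ^ s - a * x) = (Fintype.card L : ℂ) := by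
  rw [Finset.sum_comm]
  have h1 : ∀ x : L, ∑ a : L, mu p (x ^ s - a * x)
      = mu p (x ^ s) * (if -x = 0 then (Fintype.card L : ℂ) else 0) := by
    intro x
    rw [← sum_mu_mul p (-x), Finset.mul_sum]
    exact Finset.sum_congr rfl fun a _ => mu_split p _ _ _ (by ring)
  rw [Finset.sum_congr rfl (fun x _ => h1 x)]
  rw [Finset.sum_eq_single_of_mem 0 (mem_univ _)]
  · rw [if_pos (by ring), zero_pow (Nat.one_le_iff_ne_zero.mp hs), mu_zero]
    ring
  · intro x _ hx
    rw [if_neg (by simpa using hx), mul_zero]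

include hs hcop in
lemma moment_two :
    ∑ a : L, (∑ x : L, mu p (x ^ s - a * x)) ^ 2 = (Fintype.card L : ℂ) ^ 2 := by
  have expand : ∀ a : L, (∑ x : L, mu p (x ^ s - a * x)) ^ 2
      = ∑ x : L, ∑ y : L, mu p (x ^ s + y ^ s) * mu p ((-(x + y)) * a) := by
    intro a
    rw [sq, Finset.sum_mul_sum]
    refine Finset.sum_congr rfl fun x _ => Finset.sum_congr rfl fun y _ => ?_
    rw [← mu_add, ← mu_add]
    congr 1; ring
  rw [Finset.sum_congr rfl (fun a _ => expand a), Finset.sum_comm]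
  have h1 : ∀ x : L, ∑ a : L, ∑ y : L, mu p (x ^ s + y ^ s) * mu p ((-(x + y)) * a)
      = ∑ y : L, mu p (x ^ s + y ^ s) * (if -(x + y) = 0 then (Fintype.card L : ℂ) else 0) := by
    intro x
    rw [Finset.sum_comm]
    exact Finset.sum_congr rfl fun y _ => by rw [← Finset.mul_sum, sum_mu_mul]
  rw [Finset.sum_congr rfl (fun x _ => h1 x)]
  have h2 : ∀ x : L, (∑ y : L, mu p (x ^ s + y ^ s) *
      (if -(x + y) = 0 then (Fintype.card L : ℂ) else 0)) = (Fintype.card L : ℂ) := by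
    intro x
    rw [Finset.sum_eq_single_of_mem (-x) (mem_univ _)]
    · rw [if_pos (by ring), neg_pow_s p s hcop, add_neg_cancel, mu_zero, one_mul]
    · intro y _ hy
      rw [if_neg (fun h => hy (by linear_combination -h)), mul_zero]
  rw [Finset.sum_congr rfl (fun x _ => h2 x), Finset.sum_const, Finset.card_univ,
    nsmul_eq_mul, sq]

lemma mu_mul3 (a b c d e : L) (h : a + b + c = d + e) :
    mu p a * mu p b * mu p c = mu p d * mu p e := by
  rw [← mu_add, ← mu_add, ← mu_add, h]

include hs hcop in
lemma moment_three :
    ∑ a : L, (∑ x : L, mu p (x ^ s - a * x)) ^ 3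
      = (Fintype.card L : ℂ) ^ 2 *
        ((univ.filter (fun u : L => u ^ s + (1 - u) ^ s = 1)).card : ℂ) := by
  have hs' : s ≠ 0 := Nat.one_le_iff_ne_zero.mp hs
  -- Step 1: expand the cube and sum over a
  have expand : ∀ a : L, (∑ x : L, mu p (x ^ s - a * x)) ^ 3
      = ∑ x : L, ∑ y : L, ∑ z : L,
          mu p (x ^ s + y ^ s + z ^ s) * mu p ((-(x + y + z)) * a) := by
    intro a
    have h3 : (∑ x : L, mu p (x ^ s - a * x)) ^ 3
        = ∑ x : L, ∑ y : L, ∑ z : L,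
            mu p (x ^ s - a * x) * mu p (y ^ s - a * y) * mu p (z ^ s - a * z) := by
      rw [pow_succ, sq, Finset.sum_mul_sum, Finset.sum_mul]
      refine Finset.sum_congr rfl fun x _ => ?_
      rw [Finset.sum_mul]
      refine Finset.sum_congr rfl fun y _ => ?_
      exact Finset.mul_sum _ _ _
    rw [h3]
    refine Finset.sum_congr rfl fun x _ => Finset.sum_congr rfl fun y _ =>
      Finset.sum_congr rfl fun z _ => mu_mul3 p _ _ _ _ _ (by ring)
  rw [Finset.sum_congr rfl (fun a _ => expand a)]
  rw [Finset.sum_comm]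
  have step1 : ∀ x : L, ∑ a : L, ∑ y : L, ∑ z : L,
        mu p (x ^ s + y ^ s + z ^ s) * mu p ((-(x + y + z)) * a)
      = ∑ y : L, ∑ z : L, mu p (x ^ s + y ^ s + z ^ s) *
          (if -(x + y + z) = 0 then (Fintype.card L : ℂ) else 0) := by
    intro x
    rw [Finset.sum_comm]
    refine Finset.sum_congr rfl fun y _ => ?_
    rw [Finset.sum_comm]
    refine Finset.sum_congr rfl fun z _ => ?_
    rw [← Finset.mul_sum, sum_mu_mul]
  rw [Finset.sum_congr rfl (fun x _ => step1 x)]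
  -- Step 2: collapse the z-sum
  have step2 : ∀ x y : L, (∑ z : L, mu p (x ^ s + y ^ s + z ^ s) *
        (if -(x + y + z) = 0 then (Fintype.card L : ℂ) else 0))
      = (Fintype.card L : ℂ) * mu p (x ^ s + y ^ s - (x + y) ^ s) := by
    intro x y
    rw [Finset.sum_eq_single_of_mem (-(x + y)) (mem_univ _)]
    · rw [if_pos (by ring), neg_pow_s p s hcop]
      rw [show x ^ s + y ^ s + -( (x + y) ^ s) = x ^ s + y ^ s - (x + y) ^ s by ring]
      ring
    · intro z _ hz
      rw [if_neg (fun h => hz (by linear_combination -h)), mul_zero]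
  rw [Finset.sum_congr rfl (fun x _ => Finset.sum_congr rfl (fun y _ => step2 x y))]
  -- Step 3: reindex y ↦ c = x + y, swap, then x ↦ c * u
  have step3 : ∀ x : L, ∑ y : L, (Fintype.card L : ℂ) * mu p (x ^ s + y ^ s - (x + y) ^ s)
      = ∑ c : L, (Fintype.card L : ℂ) * mu p (x ^ s + (c - x) ^ s - c ^ s) := by
    intro x
    rw [← Equiv.sum_comp (Equiv.addLeft x)
      (fun c => (Fintype.card L : ℂ) * mu p (x ^ s + (c - x) ^ s - c ^ s))]
    refine Finset.sum_congr rfl fun y _ => ?_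
    simp only [Equiv.coe_addLeft]
    rw [add_sub_cancel_left]
  rw [Finset.sum_congr rfl (fun x _ => step3 x), Finset.sum_comm]
  have step4 : ∀ c : L, ∑ x : L, (Fintype.card L : ℂ) * mu p (x ^ s + (c - x) ^ s - c ^ s)
      = ∑ u : L, (Fintype.card L : ℂ) * mu p (c ^ s * (u ^ s + (1 - u) ^ s - 1)) := by
    intro c
    rcases eq_or_ne c 0 with rfl | hc
    · refine Finset.sum_congr rfl fun x _ => ?_
      rw [zero_pow hs', zero_mul, mu_zero]
      rw [show x ^ s + (0 - x) ^ s - 0 = x ^ s + (-x) ^ s by ring, neg_pow_s p s hcop,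
        show x ^ s + -(x ^ s) = (0 : L) by ring, mu_zero]
    · rw [← Equiv.sum_comp (Equiv.mulLeft₀ c hc)
        (fun x => (Fintype.card L : ℂ) * mu p (x ^ s + (c - x) ^ s - c ^ s))]
      refine Finset.sum_congr rfl fun u _ => ?_
      have : (Equiv.mulLeft₀ c hc) u = c * u := rfl
      rw [this]
      congr 2
      rw [show c - c * u = c * (1 - u) by ring, mul_pow, mul_pow]
      ring
  rw [Finset.sum_congr rfl (fun c _ => step4 c), Finset.sum_comm]
  -- Step 4: sum over c using bijectivity of c ↦ c ^ s
  have step5 : ∀ u : L, ∑ c : L, (Fintype.card L : ℂ) * mu p (c ^ s * (u ^ s + (1 - u) ^ s - 1))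
      = (Fintype.card L : ℂ) * (if u ^ s + (1 - u) ^ s = 1 then (Fintype.card L : ℂ) else 0) := by
    intro u
    rw [← Finset.mul_sum]
    congr 1
    rw [Fintype.sum_bijective (fun c : L => c ^ s) (pow_s_bijective s hs hcop) _
      (fun d => mu p (d * (u ^ s + (1 - u) ^ s - 1))) (fun c => rfl)]
    have : ∀ d : L, mu p (d * (u ^ s + (1 - u) ^ s - 1))
        = mu p ((u ^ s + (1 - u) ^ s - 1) * d) := fun d => by rw [mul_comm]
    rw [Finset.sum_congr rfl (fun d _ => this d), sum_mu_mul]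
    congr 1
    simp [sub_eq_zero]
  rw [Finset.sum_congr rfl (fun u _ => step5 u), ← Finset.mul_sum]
  have step6 : ∑ u : L, (if u ^ s + (1 - u) ^ s = 1 then (Fintype.card L : ℂ) else 0)
      = ((univ.filter (fun u : L => u ^ s + (1 - u) ^ s = 1)).card : ℂ) * (Fintype.card L : ℂ) := by
    rw [← Finset.sum_filter, Finset.sum_const, nsmul_eq_mul]
  rw [step6]
  ring
end aux3

theorem stmt_10 (p : ℕ) [Fact p.Prime] (L : Type*) [Field L] [Fintype L] [CharP L p]
    [Algebra (ZMod p) L] (s : ℕ) (hcop : Nat.Coprime s (Fintype.card L - 1))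
    (A B : ℤ) (hA : A ≠ 0) (hB : B ≠ 0) (hAB : A ≠ B)
    (hW : {w : ℂ | ∃ a : L, a ≠ 0 ∧ ∑ x : L, mu p (x ^ s - a * x) = w}
            = {0, (A : ℂ), (B : ℂ)}) :
    (Nat.card {xy : L × L // xy.1 + xy.2 = 1 ∧ xy.1 ^ s + xy.2 ^ s = 1} : ℂ)
      = (A : ℂ) + B - A * B / (Fintype.card L : ℂ) := by
  classical
  have hq2 : 1 < Fintype.card L := Fintype.one_lt_card
  rcases Nat.eq_zero_or_pos s with hs0 | hs
  · exfalso
    have h1 : Fintype.card L - 1 = 1 := by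
      rw [hs0] at hcop
      simpa [Nat.Coprime] using hcop
    have hone : ∀ a : L, a ≠ 0 → a = 1 := by
      intro a ha
      have h := FiniteField.pow_card_sub_one_eq_one a ha
      rwa [h1, pow_one] at h
    have h0mem : (0 : ℂ) ∈ ({0, (A : ℂ), (B : ℂ)} : Set ℂ) := by simp
    have hAmem : ((A : ℂ)) ∈ ({0, (A : ℂ), (B : ℂ)} : Set ℂ) := by simp
    rw [← hW] at h0mem hAmem
    obtain ⟨a0, ha0, hWa0⟩ := h0mem
    obtain ⟨a1, ha1, hWa1⟩ := hAmem
    rw [hone a0 ha0] at hWa0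
    rw [hone a1 ha1, hWa0] at hWa1
    exact hA (by exact_mod_cast hWa1.symm)
  · have hq0 : (Fintype.card L : ℂ) ≠ 0 := Nat.cast_ne_zero.mpr (by omega)
    set W : L → ℂ := fun a => ∑ x : L, mu p (x ^ s - a * x) with hWdef
    -- step A : Nat.card equals the filter cardinality
    set N := (univ.filter (fun u : L => u ^ s + (1 - u) ^ s = 1)).card with hN
    have hcard : Nat.card {xy : L × L // xy.1 + xy.2 = 1 ∧ xy.1 ^ s + xy.2 ^ s = 1} = N := by
      have e : {xy : L × L // xy.1 + xy.2 = 1 ∧ xy.1 ^ s + xy.2 ^ s = 1}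
          ≃ {u : L // u ^ s + (1 - u) ^ s = 1} :=
        { toFun := fun z => ⟨z.1.1, by
            obtain ⟨h1, h2⟩ := z.2
            rwa [eq_sub_of_add_eq' h1] at h2⟩
          invFun := fun u => ⟨(u.1, 1 - u.1), ⟨by ring, u.2⟩⟩
          left_inv := fun z => by
            obtain ⟨h1, _⟩ := z.2
            exact Subtype.ext (Prod.ext rfl (eq_sub_of_add_eq' h1).symm)
          right_inv := fun u => rfl }
      rw [Nat.card_eq_fintype_card, Fintype.card_congr e, Fintype.card_subtype]
    rw [hcard]
    -- step B : the pointwise cubic identity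
    have hval : ∀ a : L, W a = 0 ∨ W a = (A : ℂ) ∨ W a = (B : ℂ) := by
      intro a
      rcases eq_or_ne a 0 with rfl | ha
      · left; exact W_zero p s hs hcop
      · have : W a ∈ {w : ℂ | ∃ b : L, b ≠ 0 ∧ ∑ x : L, mu p (x ^ s - b * x) = w} :=
          ⟨a, ha, rfl⟩
        rw [hW] at this
        simpa using this
    have hcube : ∀ a : L, W a ^ 3 = ((A : ℂ) + B) * W a ^ 2 - (A * B) * W a := by
      intro a
      rcases hval a with h | h | h <;> rw [h] <;> ring
    -- step C : combine the moments
    have hm1 : ∑ a : L, W a = (Fintype.card L : ℂ) := moment_one p s hs hcop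
    have hm2 : ∑ a : L, W a ^ 2 = (Fintype.card L : ℂ) ^ 2 := moment_two p s hs hcop
    have hm3 : ∑ a : L, W a ^ 3 = (Fintype.card L : ℂ) ^ 2 * (N : ℂ) :=
      moment_three p s hs hcop
    have hsum : ∑ a : L, W a ^ 3
        = ((A : ℂ) + B) * (Fintype.card L : ℂ) ^ 2 - (A * B) * (Fintype.card L : ℂ) := by
      rw [Finset.sum_congr rfl (fun a _ => hcube a), Finset.sum_sub_distrib,
        ← Finset.mul_sum, ← Finset.mul_sum, hm1, hm2]
    rw [hsum] at hm3
    field_simp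
    refine mul_right_cancel₀ hq0 ?_
    linear_combination -hm3
end

section
/- Let L be a finite field of order q with q ≡ 5 (mod 6), s = q - 2, and N(v) the number of pairs (x,y) ∈ L² with x + y = 1 and x^s + y^s = v. Then N takes only the values 0, 1, 2, with value 0 occurring for (q-1)/2 values of v, value 1 for exactly one v, and value 2 for (q-1)/2 values of v. -/
/-!
Since `x ^ (q - 2) = x⁻¹` (with `0⁻¹ = 0`), `N v` counts the `x` with `x⁻¹ + (1 - x)⁻¹ = v`.
A root of `z ^ 2 - z + 1` would make `-z` a cube root of unity different from `1`, impossible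
when `q ≡ 2 (mod 3)`; hence `x⁻¹ + (1 - x)⁻¹` is `1` only at `x = 0, 1` and equals
`(x (1 - x))⁻¹` elsewhere, so its fibres are exactly the pairs `{x, 1 - x}`. In odd
characteristic exactly one of them, `{1/2}`, is a singleton, and counting the `q` points of `L`
fibre by fibre gives the rest.
-/

open Finset

namespace FiniteField

variable {K : Type*} [Field K] [Fintype K]

theorem natCast_ne_zero_of_coprime_card {n : ℕ} (hn : n.Coprime (Fintype.card K)) :
    (n : K) ≠ 0 := fun h =>
  one_ne_zero ((nsmul_eq_zero_iff_of_coprime (a := (1 : K)) hn).1 ⟨by simpa using h, by simp⟩)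

theorem eq_one_of_pow_eq_one_of_coprime {x : K} {n : ℕ} (hx : x ^ n = 1) (hn0 : n ≠ 0)
    (hn : n.Coprime (Fintype.card K - 1)) : x = 1 := by
  have hx0 : x ≠ 0 := by
    rintro rfl
    simp [hn0] at hx
  exact (pow_eq_one_iff_of_coprime hn).1 ⟨hx, pow_card_sub_one_eq_one x hx0⟩

theorem pow_card_sub_two (hK : 2 < Fintype.card K) (x : K) : x ^ (Fintype.card K - 2) = x⁻¹ := by
  rcases eq_or_ne x 0 with rfl | hx
  · rw [inv_zero, zero_pow (by omega)]
  · refine eq_inv_of_mul_eq_one_right ?_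
    rw [← pow_succ', show Fintype.card K - 2 + 1 = Fintype.card K - 1 by omega,
      pow_card_sub_one_eq_one x hx]

theorem sq_sub_self_add_one_ne_zero (hK : Fintype.card K % 3 = 2) (z : K) :
    z ^ 2 - z + 1 ≠ 0 := by
  intro hz
  have hcube : (-z) ^ 3 = 1 := by linear_combination (-(z + 1)) * hz
  have hz1 : -z = 1 := eq_one_of_pow_eq_one_of_coprime hcube three_ne_zero
    ((Nat.Prime.coprime_iff_not_dvd Nat.prime_three).2 (by omega))
  refine natCast_ne_zero_of_coprime_card (K := K) (n := 3)
    ((Nat.Prime.coprime_iff_not_dvd Nat.prime_three).2 (by omega)) ?_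
  rw [show z = -1 by linear_combination -hz1] at hz
  push_cast
  linear_combination hz

end FiniteField

section InvAddInvOneSub

variable {K : Type*} [Field K]

theorem inv_add_inv_one_sub_of_ne {z : K} (hz0 : z ≠ 0) (hz1 : z ≠ 1) :
    z⁻¹ + (1 - z)⁻¹ = (z * (1 - z))⁻¹ := by
  rw [inv_add_inv hz0 (sub_ne_zero.2 hz1.symm), add_sub_cancel, one_div]

theorem inv_add_inv_one_sub_eq_one_iff (h : ∀ z : K, z ^ 2 - z + 1 ≠ 0) {z : K} :
    z⁻¹ + (1 - z)⁻¹ = 1 ↔ z = 0 ∨ z = 1 := by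
  refine ⟨fun hz => ?_, by rintro (rfl | rfl) <;> simp⟩
  by_contra! hne
  rw [inv_add_inv_one_sub_of_ne hne.1 hne.2, inv_eq_one] at hz
  exact h z (by linear_combination -hz)

theorem inv_add_inv_one_sub_eq_iff (h : ∀ z : K, z ^ 2 - z + 1 ≠ 0) {x y : K} :
    y⁻¹ + (1 - y)⁻¹ = x⁻¹ + (1 - x)⁻¹ ↔ y = x ∨ y = 1 - x := by
  refine ⟨fun hxy => ?_, by rintro (rfl | rfl) <;> simp [add_comm]⟩
  by_cases hx : x = 0 ∨ x = 1
  · have hy := (inv_add_inv_one_sub_eq_one_iff h).1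
      (hxy.trans ((inv_add_inv_one_sub_eq_one_iff h).2 hx))
    rcases hx with rfl | rfl <;> rcases hy with rfl | rfl <;> simp
  by_cases hy : y = 0 ∨ y = 1
  · exact absurd ((inv_add_inv_one_sub_eq_one_iff h).1
      (hxy.symm.trans ((inv_add_inv_one_sub_eq_one_iff h).2 hy))) hx
  push Not at hx hy
  rw [inv_add_inv_one_sub_of_ne hx.1 hx.2, inv_add_inv_one_sub_of_ne hy.1 hy.2, inv_inj] at hxy
  have hprod : (y - x) * (y - (1 - x)) = 0 := by linear_combination -hxy
  rcases mul_eq_zero.1 hprod with hyx | hyx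
  · exact .inl (sub_eq_zero.1 hyx)
  · exact .inr (sub_eq_zero.1 hyx)

variable [Fintype K] [DecidableEq K]

theorem filter_inv_add_inv_one_sub_eq (h : ∀ z : K, z ^ 2 - z + 1 ≠ 0) (x : K) :
    ({y | y⁻¹ + (1 - y)⁻¹ = x⁻¹ + (1 - x)⁻¹} : Finset K) = {x, 1 - x} := by
  ext y
  simp [inv_add_inv_one_sub_eq_iff h]

theorem card_filter_inv_add_inv_one_sub_le_two (h : ∀ z : K, z ^ 2 - z + 1 ≠ 0) (v : K) :
    #{y | y⁻¹ + (1 - y)⁻¹ = v} ≤ 2 := by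
  rcases ({y | y⁻¹ + (1 - y)⁻¹ = v} : Finset K).eq_empty_or_nonempty with hv | ⟨x, hx⟩
  · simp [hv]
  rw [(mem_filter.1 hx).2.symm, filter_inv_add_inv_one_sub_eq h]
  exact card_le_two

theorem card_filter_inv_add_inv_one_sub_eq_one_iff (h2 : (2 : K) ≠ 0)
    (h : ∀ z : K, z ^ 2 - z + 1 ≠ 0) (v : K) :
    #{y | y⁻¹ + (1 - y)⁻¹ = v} = 1 ↔ v = 2⁻¹⁻¹ + (1 - 2⁻¹)⁻¹ := by
  constructor
  · intro hv
    obtain ⟨x, hx⟩ := card_pos.1 (hv.symm ▸ one_pos)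
    obtain rfl := (mem_filter.1 hx).2
    rw [filter_inv_add_inv_one_sub_eq h] at hv
    have hx1 : x = 1 - x := by
      by_contra hne
      simp [card_pair hne] at hv
    rw [show x = 2⁻¹ by field_simp; linear_combination hx1]
  · rintro rfl
    have half : (1 : K) - 2⁻¹ = 2⁻¹ := by field_simp; norm_num
    rw [filter_inv_add_inv_one_sub_eq h, half, pair_eq_singleton, card_singleton]

end InvAddInvOneSub

section FiberCounts

variable {β : Type*} [Fintype β] (c : β → ℕ)

theorem card_filter_eq_one_add_two_mul_card_filter_eq_two (hc : ∀ b, c b ≤ 2) :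
    #{b | c b = 1} + 2 * #{b | c b = 2} = ∑ b, c b := by
  calc #{b | c b = 1} + 2 * #{b | c b = 2}
      = ∑ b, ((if c b = 1 then 1 else 0) + 2 * if c b = 2 then 1 else 0) := by
        simp only [sum_add_distrib, ← mul_sum, sum_boole, Nat.cast_id]
    _ = ∑ b, c b := sum_congr rfl fun b _ => by have := hc b; split_ifs <;> omega

theorem card_filter_eq_zero_add_card_filter_eq_one_add_card_filter_eq_two (hc : ∀ b, c b ≤ 2) :
    #{b | c b = 0} + #{b | c b = 1} + #{b | c b = 2} = Fintype.card β := by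
  calc #{b | c b = 0} + #{b | c b = 1} + #{b | c b = 2}
      = ∑ b, ((if c b = 0 then 1 else 0) + (if c b = 1 then 1 else 0) +
          if c b = 2 then 1 else 0) := by
        simp only [sum_add_distrib, sum_boole, Nat.cast_id]
    _ = ∑ _b, 1 := sum_congr rfl fun b _ => by have := hc b; split_ifs <;> omega
    _ = Fintype.card β := by simp

end FiberCounts

theorem natCard_prod_add_eq_one_and {R β : Type*} [Ring R] (F : R → R → β) (v : β) :
    Nat.card {p : R × R // p.1 + p.2 = 1 ∧ F p.1 p.2 = v} = Nat.card {x : R // F x (1 - x) = v} :=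
  Nat.card_congr
    { toFun p := ⟨p.1.1, by rw [← eq_sub_of_add_eq' p.2.1]; exact p.2.2⟩
      invFun x := ⟨(x.1, 1 - x.1), add_sub_cancel _ _, x.2⟩
      left_inv p := by
        obtain ⟨⟨x, y⟩, hxy, -⟩ := p
        ext <;> simp [← hxy]
      right_inv _ := rfl }

theorem stmt_15 (L : Type*) [Field L] [Fintype L]
    (hq : Fintype.card L % 6 = 5) :
    (∀ v : L,
        Nat.card {xy : L × L // xy.1 + xy.2 = 1 ∧
            xy.1 ^ (Fintype.card L - 2) + xy.2 ^ (Fintype.card L - 2) = v} = 0 ∨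
        Nat.card {xy : L × L // xy.1 + xy.2 = 1 ∧
            xy.1 ^ (Fintype.card L - 2) + xy.2 ^ (Fintype.card L - 2) = v} = 1 ∨
        Nat.card {xy : L × L // xy.1 + xy.2 = 1 ∧
            xy.1 ^ (Fintype.card L - 2) + xy.2 ^ (Fintype.card L - 2) = v} = 2) ∧
    Nat.card {v : L // Nat.card {xy : L × L // xy.1 + xy.2 = 1 ∧
        xy.1 ^ (Fintype.card L - 2) + xy.2 ^ (Fintype.card L - 2) = v} = 0}
      = (Fintype.card L - 1) / 2 ∧
    Nat.card {v : L // Nat.card {xy : L × L // xy.1 + xy.2 = 1 ∧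
        xy.1 ^ (Fintype.card L - 2) + xy.2 ^ (Fintype.card L - 2) = v} = 1} = 1 ∧
    Nat.card {v : L // Nat.card {xy : L × L // xy.1 + xy.2 = 1 ∧
        xy.1 ^ (Fintype.card L - 2) + xy.2 ^ (Fintype.card L - 2) = v} = 2}
      = (Fintype.card L - 1) / 2 := by
  classical
  have h2 : (2 : L) ≠ 0 := mod_cast FiniteField.natCast_ne_zero_of_coprime_card
    ((Nat.Prime.coprime_iff_not_dvd Nat.prime_two).2 (by omega))
  have hroot := FiniteField.sq_sub_self_add_one_ne_zero (K := L) (by omega)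
  simp only [FiniteField.pow_card_sub_two (K := L) (by omega),
    natCard_prod_add_eq_one_and (fun x y : L => x⁻¹ + y⁻¹), Nat.card_eq_fintype_card,
    Fintype.card_subtype]
  have hc : ∀ v : L, #{x | x⁻¹ + (1 - x)⁻¹ = v} ≤ 2 :=
    card_filter_inv_add_inv_one_sub_le_two hroot
  have hsum : ∑ v : L, #{x | x⁻¹ + (1 - x)⁻¹ = v} = Fintype.card L :=
    (card_eq_sum_card_fiberwise (by simp)).symm
  have h1 : #{v : L | #{x | x⁻¹ + (1 - x)⁻¹ = v} = 1} = 1 := card_eq_one.2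
    ⟨2⁻¹⁻¹ + (1 - 2⁻¹)⁻¹, by
      ext v
      simp only [mem_filter, mem_univ, true_and, mem_singleton,
        card_filter_inv_add_inv_one_sub_eq_one_iff h2 hroot]⟩
  have hweighted := card_filter_eq_one_add_two_mul_card_filter_eq_two _ hc
  have htotal := card_filter_eq_zero_add_card_filter_eq_one_add_card_filter_eq_two _ hc
  exact ⟨fun v => by have := hc v; omega, by omega, h1, by omega⟩
end

section
/- Let L be a finite field of characteristic 2 with [L : F₂] odd (so q = |L| ≡ 2 mod 6), s = q - 2, and N(v) the number of pairs (x,y) ∈ L² with x + y = 1 and x^s + y^s = v. Then N takes only the values 0 and 2, each occurring for exactly q/2 values of v. -/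
open Finset

section aux
variable {L : Type*} [Field L] [Fintype L] [CharP L 2]

lemma aux_no_sol (m : ℕ) (hm : Odd m) (hcard : Fintype.card L = 2 ^ m)
    (a : L) : a ^ 2 + a ≠ 1 := by
  intro h
  have h2 : (2 : L) = 0 := CharTwo.two_eq_zero
  have ha0 : a ≠ 0 := by rintro rfl; simp at h
  have ha1 : a ≠ 1 := by rintro rfl; rw [one_pow] at h; simp [CharTwo.add_self_eq_zero] at h
  have h3 : a ^ 3 = 1 := by
    have ha2 : a ^ 2 = 1 + a := by linear_combination h - a * h2
    calc a ^ 3 = a * a ^ 2 := by ring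
    _ = a * (1 + a) := by rw [ha2]
    _ = a + a ^ 2 := by ring
    _ = 1 := by linear_combination h
  have hord : orderOf a = 3 := by
    rcases (Nat.prime_three).eq_one_or_self_of_dvd _ (orderOf_dvd_of_pow_eq_one h3) with h1 | h1
    · exact absurd (orderOf_eq_one_iff.mp h1) ha1
    · exact h1
  have hdvd : (3 : ℕ) ∣ Fintype.card L - 1 := by
    rw [← hord]
    exact orderOf_dvd_of_pow_eq_one (FiniteField.pow_card_sub_one_eq_one a ha0)
  obtain ⟨k, rfl⟩ := hm
  rw [hcard] at hdvd
  have hA : (4 : ℕ) ^ k % 3 = 1 := by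
    rw [Nat.pow_mod]; simp
  have hpow : (2 : ℕ) ^ (2 * k + 1) = 4 ^ k * 2 := by
    rw [pow_succ, pow_mul]; norm_num
  rw [hpow] at hdvd
  omega
end aux

section aux2
variable {L : Type*} [Field L] [Fintype L] [CharP L 2]

open Classical in
lemma aux_fiber (c : L) :
    (univ.filter (fun x : L => x ^ 2 + x = c)).card = 0 ∨
    (univ.filter (fun x : L => x ^ 2 + x = c)).card = 2 := by
  classical
  by_cases hex : ∃ a : L, a ^ 2 + a = c
  · obtain ⟨a, ha⟩ := hex
    right
    have : (univ.filter (fun x : L => x ^ 2 + x = c)) = {a, a + 1} := by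
      ext x
      simp only [mem_filter, mem_univ, true_and, mem_insert, mem_singleton]
      have h2 : (2 : L) = 0 := CharTwo.two_eq_zero
      constructor
      · intro hx
        have ht : (x + a) ^ 2 + (x + a) = 0 := by
          rw [CharTwo.add_sq]
          linear_combination hx - ha + (a + a ^ 2) * h2
        have : (x + a) * ((x + a) + 1) = 0 := by linear_combination ht
        rcases mul_eq_zero.mp this with h | h
        · left; linear_combination h - a * h2
        · right; linear_combination h - (a + 1) * h2
      · rintro (rfl | rfl)
        · exact ha
        · rw [CharTwo.add_sq]; linear_combination ha + h2
    rw [this]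
    rw [card_pair]
    intro hcon
    have h2 : (2 : L) = 0 := CharTwo.two_eq_zero
    have : (1 : L) = 0 := by linear_combination -hcon
    simp at this
  · left
    rw [Finset.card_eq_zero, Finset.filter_eq_empty_iff]
    intro x _
    exact fun hx => hex ⟨x, hx⟩
end aux2

section aux3
variable {L : Type*} [Field L] [Fintype L] [CharP L 2]

lemma aux_pow_inv (hq : 2 < Fintype.card L) (x : L) :
    x ^ (Fintype.card L - 2) = x⁻¹ := by
  by_cases hx : x = 0
  · subst hx; rw [inv_zero, zero_pow]; omega
  · have h1 : x ^ (Fintype.card L - 2) * x = 1 := by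
      rw [← pow_succ]
      have : Fintype.card L - 2 + 1 = Fintype.card L - 1 := by omega
      rw [this]
      exact FiniteField.pow_card_sub_one_eq_one x hx
    field_simp at h1 ⊢
    exact h1

lemma aux_f_eq (x : L) (hx0 : x ≠ 0) (hx1 : x ≠ 1) :
    x⁻¹ + (1 + x)⁻¹ = (x ^ 2 + x)⁻¹ := by
  have h2 : (2 : L) = 0 := CharTwo.two_eq_zero
  have h1x : (1 : L) + x ≠ 0 := by
    intro h; apply hx1; linear_combination h - h2
  rw [inv_add_inv hx0 h1x]
  have hx : x + (1 + x) = 1 := by linear_combination x * h2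
  rw [hx, one_div]
  congr 1
  ring
end aux3

theorem stmt_16 (L : Type*) [Field L] [Fintype L] [CharP L 2]
    (m : ℕ) (hm : Odd m) (hcard : Fintype.card L = 2 ^ m) :
    (∀ v : L,
        Nat.card {xy : L × L // xy.1 + xy.2 = 1 ∧
            xy.1 ^ (Fintype.card L - 2) + xy.2 ^ (Fintype.card L - 2) = v} = 0 ∨
        Nat.card {xy : L × L // xy.1 + xy.2 = 1 ∧
            xy.1 ^ (Fintype.card L - 2) + xy.2 ^ (Fintype.card L - 2) = v} = 2) ∧
    Nat.card {v : L // Nat.card {xy : L × L // xy.1 + xy.2 = 1 ∧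
        xy.1 ^ (Fintype.card L - 2) + xy.2 ^ (Fintype.card L - 2) = v} = 0}
      = Fintype.card L / 2 ∧
    Nat.card {v : L // Nat.card {xy : L × L // xy.1 + xy.2 = 1 ∧
        xy.1 ^ (Fintype.card L - 2) + xy.2 ^ (Fintype.card L - 2) = v} = 2}
      = Fintype.card L / 2 := by
  classical
  have h2 : (2 : L) = 0 := CharTwo.two_eq_zero
  -- Step A: identify Nat.card of pair-subtype with a fiber cardinality
  have hA : ∀ v : L,
      Nat.card {xy : L × L // xy.1 + xy.2 = 1 ∧
          xy.1 ^ (Fintype.card L - 2) + xy.2 ^ (Fintype.card L - 2) = v}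
        = (univ.filter (fun x : L =>
            x ^ (Fintype.card L - 2) + (1 + x) ^ (Fintype.card L - 2) = v)).card := by
    intro v
    have e : {xy : L × L // xy.1 + xy.2 = 1 ∧
        xy.1 ^ (Fintype.card L - 2) + xy.2 ^ (Fintype.card L - 2) = v} ≃
        {x : L // x ^ (Fintype.card L - 2) + (1 + x) ^ (Fintype.card L - 2) = v} :=
      { toFun := fun p => ⟨p.1.1, by
          obtain ⟨h1, hv⟩ := p.2
          have hy : p.1.2 = 1 + p.1.1 := by linear_combination h1 - p.1.1 * h2
          rwa [hy] at hv⟩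
        invFun := fun x => ⟨(x.1, 1 + x.1), by
          refine ⟨by linear_combination x.1 * h2, x.2⟩⟩
        left_inv := fun p => Subtype.ext (Prod.ext rfl (by
          have h1 := p.2.1
          linear_combination h1 + (1 - p.1.2) * h2))
        right_inv := fun x => rfl }
    rw [Nat.card_congr e, Nat.card_eq_fintype_card, Fintype.card_subtype]
  -- Step B: each fiber has 0 or 2 elements
  have hB : ∀ v : L,
      (univ.filter (fun x : L =>
          x ^ (Fintype.card L - 2) + (1 + x) ^ (Fintype.card L - 2) = v)).card = 0 ∨
      (univ.filter (fun x : L =>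
          x ^ (Fintype.card L - 2) + (1 + x) ^ (Fintype.card L - 2) = v)).card = 2 := by
    intro v
    have hm1 : 1 ≤ m := hm.pos
    have hq2 : 2 ≤ Fintype.card L := by
      calc 2 = 2 ^ 1 := by norm_num
      _ ≤ 2 ^ m := Nat.pow_le_pow_right (by norm_num) hm1
      _ = Fintype.card L := hcard.symm
    rcases eq_or_lt_of_le hq2 with hq | hq
    · -- card = 2 : L = F₂, exponent is 0, f x = 1 + 1 = 0 always
      have hs0 : Fintype.card L - 2 = 0 := by omega
      simp only [hs0, pow_zero]
      by_cases hv : (1 : L) + 1 = v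
      · right
        rw [Finset.filter_true_of_mem (fun x _ => hv), card_univ, ← hq]
      · left
        rw [Finset.card_eq_zero, Finset.filter_eq_empty_iff]
        exact fun x _ => hv
    · -- card > 2 : use inverses
      have hpv : ∀ x : L, x ^ (Fintype.card L - 2) = x⁻¹ := aux_pow_inv hq
      have hf0 : (0 : L) ^ (Fintype.card L - 2) + (1 + 0 : L) ^ (Fintype.card L - 2) = 1 := by
        rw [hpv, hpv]; simp
      have h110 : (1 : L) + 1 = 0 := CharTwo.add_self_eq_zero 1
      have hf1 : (1 : L) ^ (Fintype.card L - 2) + (1 + 1 : L) ^ (Fintype.card L - 2) = 1 := by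
        rw [hpv, hpv, h110]; simp
      by_cases hv0 : v = 0
      · left
        subst hv0
        rw [Finset.card_eq_zero, Finset.filter_eq_empty_iff]
        intro x _
        by_cases hx0 : x = 0
        · subst hx0; rw [hf0]; exact one_ne_zero
        by_cases hx1 : x = 1
        · subst hx1; rw [hf1]; exact one_ne_zero
        rw [hpv, hpv, aux_f_eq x hx0 hx1]
        apply inv_ne_zero
        intro hcon
        have : x * (x + 1) = 0 := by linear_combination hcon
        rcases mul_eq_zero.mp this with h | h
        · exact hx0 h
        · exact hx1 (by linear_combination h - h2)
      by_cases hv1 : v = 1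
      · right
        subst hv1
        have hset : (univ.filter (fun x : L =>
            x ^ (Fintype.card L - 2) + (1 + x) ^ (Fintype.card L - 2) = 1)) = {0, 1} := by
          ext x
          simp only [mem_filter, mem_univ, true_and, mem_insert, mem_singleton]
          constructor
          · intro hx
            by_contra hcon
            push_neg at hcon
            obtain ⟨hx0, hx1⟩ := hcon
            rw [hpv, hpv, aux_f_eq x hx0 hx1] at hx
            have hxx : x ^ 2 + x = 1 := by
              rw [← inv_inv (x ^ 2 + x), hx, inv_one]
            exact aux_no_sol m hm hcard x hxx
          · rintro (rfl | rfl)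
            · exact hf0
            · exact hf1
        rw [hset, card_pair]
        exact zero_ne_one
      · -- v ∉ {0, 1}
        have hset : (univ.filter (fun x : L =>
            x ^ (Fintype.card L - 2) + (1 + x) ^ (Fintype.card L - 2) = v)) =
            (univ.filter (fun x : L => x ^ 2 + x = v⁻¹)) := by
          ext x
          simp only [mem_filter, mem_univ, true_and]
          constructor
          · intro hx
            have hx0 : x ≠ 0 := by rintro rfl; rw [hf0] at hx; exact hv1 hx.symm
            have hx1 : x ≠ 1 := by rintro rfl; rw [hf1] at hx; exact hv1 hx.symm
            rw [hpv, hpv, aux_f_eq x hx0 hx1] at hx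
            rw [← hx, inv_inv]
          · intro hx
            have hne : x ^ 2 + x ≠ 0 := by rw [hx]; exact inv_ne_zero hv0
            have hx0 : x ≠ 0 := by rintro rfl; simp at hne
            have hx1 : x ≠ 1 := by
              rintro rfl
              apply hne
              linear_combination h2
            rw [hpv, hpv, aux_f_eq x hx0 hx1, hx, inv_inv]
        rw [hset]
        exact aux_fiber v⁻¹
  -- Step C: counting
  set N : L → ℕ := fun v => (univ.filter (fun x : L =>
      x ^ (Fintype.card L - 2) + (1 + x) ^ (Fintype.card L - 2) = v)).card with hN
  have hsum : ∑ v : L, N v = Fintype.card L := by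
    rw [← Finset.card_univ (α := L)]
    exact (Finset.card_eq_sum_card_fiberwise
      (f := fun x : L => x ^ (Fintype.card L - 2) + (1 + x) ^ (Fintype.card L - 2))
      (fun x _ => mem_univ _)).symm
  have hsplit := Finset.sum_filter_add_sum_filter_not univ (fun v : L => N v = 2) N
  have e1 : ∑ v ∈ univ.filter (fun v : L => N v = 2), N v
      = 2 * (univ.filter (fun v : L => N v = 2)).card := by
    rw [Finset.sum_congr rfl (fun v hv => (mem_filter.mp hv).2), Finset.sum_const,
      smul_eq_mul, mul_comm]
  have e2 : ∑ v ∈ univ.filter (fun v : L => ¬ N v = 2), N v = 0 := by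
    apply Finset.sum_eq_zero
    intro v hv
    rcases hB v with h | h
    · exact h
    · exact absurd h (mem_filter.mp hv).2
  have h2S : 2 * (univ.filter (fun v : L => N v = 2)).card = Fintype.card L := by
    rw [← hsum, ← hsplit, e1, e2]
    omega
  have hcompl := Finset.card_filter_add_card_filter_not
      (s := (univ : Finset L)) (p := fun v : L => N v = 2)
  rw [Finset.card_univ] at hcompl
  have hT : (univ.filter (fun v : L => N v = 0)) = (univ.filter (fun v : L => ¬ N v = 2)) := by
    apply Finset.filter_congr
    intro v _
    have h' : N v = 0 ∨ N v = 2 := hB v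
    omega
  refine ⟨fun v => by rw [hA v]; exact hB v, ?_, ?_⟩
  · have : Nat.card {v : L // Nat.card {xy : L × L // xy.1 + xy.2 = 1 ∧
        xy.1 ^ (Fintype.card L - 2) + xy.2 ^ (Fintype.card L - 2) = v} = 0}
        = (univ.filter (fun v : L => N v = 0)).card := by
      rw [Nat.card_eq_fintype_card, Fintype.card_subtype]
      congr 1
      apply Finset.filter_congr
      intro v _
      rw [hA v]
    rw [this, hT]
    omega
  · have : Nat.card {v : L // Nat.card {xy : L × L // xy.1 + xy.2 = 1 ∧
        xy.1 ^ (Fintype.card L - 2) + xy.2 ^ (Fintype.card L - 2) = v} = 2}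
        = (univ.filter (fun v : L => N v = 2)).card := by
      rw [Nat.card_eq_fintype_card, Fintype.card_subtype]
      congr 1
      apply Finset.filter_congr
      intro v _
      rw [hA v]
    rw [this]
    omega
end
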